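/- Fano-type rate bound chain: If W_0, W_1, W_2 are independent uniform messages and Y_1, Y_2 are random variables with H(W_0|Y_2) <= nε_0, H(W_0,W_1|Y_1) <= nε_1, H(W_0,W_2|Y_2) <= nε_2, then n(R_0+R_1+R_2) - n(ε_0+ε_1+ε_2) <= I(W_0,W_1,W_2; Y_1) - I(W_2; Y_1|W_0) + I(W_2; Y_2|W_0), where R_b = H(W_b)/n. -/

import Mathlib

open Finset Real MeasureTheory
open scoped Classical

noncomputable section

/-- Probability of an event under a pmf on a finite sample space. -/
def probOf {Ω : Type*} [Fintype Ω] (p : Ω → ℝ) (E : Ω → Prop) : ℝ :=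
  ∑ ω, if E ω then p ω else 0

/-- `p` is a probability mass function. -/
def IsPMF {Ω : Type*} [Fintype Ω] (p : Ω → ℝ) : Prop :=
  (∀ ω, 0 ≤ p ω) ∧ ∑ ω, p ω = 1

/-- Shannon entropy of a discrete random variable `X` under the pmf `p`. -/
def entH {Ω α : Type*} [Fintype Ω] [Fintype α] (p : Ω → ℝ) (X : Ω → α) : ℝ :=
  ∑ x, Real.negMulLog (probOf p fun ω => X ω = x)

/-- Conditional entropy `H(X|Y)`. -/
def condH {Ω α β : Type*} [Fintype Ω] [Fintype α] [Fintype β]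
    (p : Ω → ℝ) (X : Ω → α) (Y : Ω → β) : ℝ :=
  entH p (fun ω => (X ω, Y ω)) - entH p Y

/-- Mutual information `I(X;Y)`. -/
def mi {Ω α β : Type*} [Fintype Ω] [Fintype α] [Fintype β]
    (p : Ω → ℝ) (X : Ω → α) (Y : Ω → β) : ℝ :=
  entH p X + entH p Y - entH p (fun ω => (X ω, Y ω))

/-- Conditional mutual information `I(X;Y|Z) = H(X|Z) - H(X|Y,Z)`. -/
def cmi {Ω α β γ : Type*} [Fintype Ω] [Fintype α] [Fintype β] [Fintype γ]
    (p : Ω → ℝ) (X : Ω → α) (Y : Ω → β) (Z : Ω → γ) : ℝ :=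
  condH p X Z - condH p X (fun ω => (Y ω, Z ω))

/-!
By independence, `H(W₀,W₁,W₂) = H(W₀) + H(W₁) + H(W₂)`. The chain rule splits
`H(W₀,W₁,W₂ | Y₁)` into `H(W₀,W₁ | Y₁) ≤ nε₁` and `H(W₂ | W₁,Y₁,W₀)`, and since conditioning
reduces entropy the latter is at most `H(W₂ | Y₁,W₀)`, which cancels against `I(W₂;Y₁|W₀)`.
Likewise `H(W₂ | Y₂,W₀) = H(W₀,W₂ | Y₂) - H(W₀ | Y₂) ≤ nε₂`, and `nε₀ ≥ H(W₀ | Y₂) ≥ 0`.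
-/

section Entropy

variable {Ω : Type*} [Fintype Ω] {p : Ω → ℝ}

lemma probOf_congr {E F : Ω → Prop} (h : ∀ ω, E ω ↔ F ω) : probOf p E = probOf p F :=
  Finset.sum_congr rfl fun ω _ => if_congr (h ω) rfl rfl

lemma probOf_nonneg (hp : ∀ ω, 0 ≤ p ω) (E : Ω → Prop) : 0 ≤ probOf p E :=
  Finset.sum_nonneg fun ω _ => by split_ifs <;> simp [hp ω]

lemma probOf_mono (hp : ∀ ω, 0 ≤ p ω) {E F : Ω → Prop} (h : ∀ ω, E ω → F ω) :
    probOf p E ≤ probOf p F :=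
  Finset.sum_le_sum fun ω _ => by
    by_cases hE : E ω
    · simp [hE, h ω hE]
    · by_cases hF : F ω <;> simp [hE, hF, hp ω]

lemma probOf_eq_sum {α : Type*} [Fintype α] (E : Ω → Prop) (X : Ω → α) :
    probOf p E = ∑ x, probOf p (fun ω => E ω ∧ X ω = x) := by
  unfold probOf
  rw [Finset.sum_comm]
  refine Finset.sum_congr rfl fun ω _ => ?_
  by_cases h : E ω <;> simp [h]

lemma probOf_comp_eq_sum {α β : Type*} [Fintype α] (X : Ω → α) (f : α → β) (b : β) :
    probOf p (fun ω => f (X ω) = b) = ∑ x with f x = b, probOf p (fun ω => X ω = x) := by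
  unfold probOf
  rw [Finset.sum_comm]
  refine Finset.sum_congr rfl fun ω _ => ?_
  rw [Finset.sum_ite_eq]
  simp

lemma sum_probOf_eq_one {α : Type*} [Fintype α] (hp : IsPMF p) (X : Ω → α) :
    ∑ x, probOf p (fun ω => X ω = x) = 1 := by
  unfold probOf
  rw [Finset.sum_comm, ← hp.2]
  exact Finset.sum_congr rfl fun ω _ => by simp

lemma sum_probOf_pair_eq {α γ : Type*} [Fintype α] (X : Ω → α) (Z : Ω → γ) (z : γ) :
    ∑ x, probOf p (fun ω => (X ω, Z ω) = (x, z)) = probOf p (fun ω => Z ω = z) := by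
  rw [probOf_eq_sum _ X]
  exact Finset.sum_congr rfl fun x _ => probOf_congr fun ω => by simp [and_comm]

lemma Real.negMulLog_add_le {a b : ℝ} (ha : 0 ≤ a) (hb : 0 ≤ b) :
    negMulLog (a + b) ≤ negMulLog a + negMulLog b := by
  have key : ∀ {x : ℝ}, 0 ≤ x → x ≤ a + b → x * log x ≤ x * log (a + b) := fun hx hxy => by
    rcases hx.eq_or_lt with rfl | hx
    · simp
    · exact mul_le_mul_of_nonneg_left (log_le_log hx hxy) hx.le
  simp only [negMulLog, neg_mul, add_mul]
  linarith [key ha (le_add_of_nonneg_right hb), key hb (le_add_of_nonneg_left ha)]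

lemma Real.negMulLog_sum_le {ι : Type*} (s : Finset ι) (f : ι → ℝ) (hf : ∀ i ∈ s, 0 ≤ f i) :
    negMulLog (∑ i ∈ s, f i) ≤ ∑ i ∈ s, negMulLog (f i) := by
  induction s using Finset.cons_induction with
  | empty => simp
  | cons a s ha ih =>
    rw [Finset.sum_cons, Finset.sum_cons]
    have hs := (Finset.forall_mem_cons ha _).1 hf
    exact (negMulLog_add_le hs.1 (Finset.sum_nonneg hs.2)).trans (add_le_add_right (ih hs.2) _)

lemma Real.sub_le_mul_log_div {q s : ℝ} (hq : 0 ≤ q) (hs : 0 < s) : q - s ≤ q * log (q / s) := by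
  have h := mul_le_mul_of_nonneg_left (self_sub_one_le_mul_log (div_nonneg hq hs.le)) hs.le
  rwa [mul_sub, mul_one, ← mul_assoc, mul_div_cancel₀ _ hs.ne'] at h

lemma Real.sub_mul_div_le_mul_log {q a b r : ℝ} (hq : 0 ≤ q) (ha : q ≤ a) (hb : q ≤ b)
    (hr : q ≤ r) : q - a * b / r ≤ q * (log q + log r - log a - log b) := by
  rcases hq.eq_or_lt with rfl | hq
  · simpa using div_nonneg (mul_nonneg ha hb) hr
  · have ha := hq.trans_le ha
    have hb := hq.trans_le hb
    have hr := hq.trans_le hr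
    convert sub_le_mul_log_div hq.le (div_pos (mul_pos ha hb) hr) using 2
    rw [log_div hq.ne' (by positivity), log_div (by positivity) hr.ne', log_mul ha.ne' hb.ne']
    ring

lemma entH_comp_le {α β : Type*} [Fintype α] [Fintype β] (hp : ∀ ω, 0 ≤ p ω) (X : Ω → α)
    (f : α → β) : entH p (fun ω => f (X ω)) ≤ entH p X :=
  calc entH p (fun ω => f (X ω))
      ≤ ∑ b, ∑ x with f x = b, negMulLog (probOf p fun ω => X ω = x) :=
        Finset.sum_le_sum fun b _ => by
          rw [probOf_comp_eq_sum]
          exact negMulLog_sum_le _ _ fun x _ => probOf_nonneg hp _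
    _ = entH p X := Finset.sum_fiberwise _ _ _

lemma entH_congr {α β : Type*} [Fintype α] [Fintype β] (hp : ∀ ω, 0 ≤ p ω) {X : Ω → α}
    {Y : Ω → β} (f : α → β) (g : β → α) (hY : ∀ ω, Y ω = f (X ω)) (hX : ∀ ω, X ω = g (Y ω)) :
    entH p X = entH p Y := by
  obtain rfl : Y = fun ω => f (X ω) := funext hY
  refine le_antisymm ?_ (entH_comp_le hp X f)
  calc entH p X = entH p (fun ω => g (f (X ω))) := congrArg _ (funext hX)
    _ ≤ _ := entH_comp_le hp _ g

lemma entH_prod_rotate {α β γ : Type*} [Fintype α] [Fintype β] [Fintype γ]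
    (hp : ∀ ω, 0 ≤ p ω) (X : Ω → α) (Y : Ω → β) (Z : Ω → γ) :
    entH p (fun ω => ((X ω, Y ω), Z ω)) = entH p (fun ω => (Y ω, Z ω, X ω)) :=
  entH_congr hp (fun t => (t.1.2, t.2, t.1.1)) (fun s => ((s.2.2, s.1), s.2.1))
    (fun _ => rfl) (fun _ => rfl)

lemma condH_nonneg {α β : Type*} [Fintype α] [Fintype β] (hp : ∀ ω, 0 ≤ p ω) (X : Ω → α)
    (Y : Ω → β) : 0 ≤ condH p X Y :=
  sub_nonneg.2 (entH_comp_le hp (fun ω => (X ω, Y ω)) Prod.snd)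

lemma entH_comp_eq_sum {τ β : Type*} [Fintype τ] [Fintype β] (T : Ω → τ) (f : τ → β) :
    entH p (fun ω => f (T ω)) =
      ∑ t, -(probOf p (fun ω => T ω = t) * log (probOf p fun ω => f (T ω) = f t)) := by
  rw [← Finset.sum_fiberwise _ f]
  refine Finset.sum_congr rfl fun b _ => ?_
  rw [negMulLog, neg_mul]
  nth_rw 1 [probOf_comp_eq_sum]
  rw [Finset.sum_mul, ← Finset.sum_neg_distrib]
  refine Finset.sum_congr rfl fun t ht => ?_
  rw [(Finset.mem_filter.1 ht).2]

lemma sum_probOf_mul_probOf_div_eq_one {α β γ : Type*} [Fintype α] [Fintype β] [Fintype γ]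
    (hp : IsPMF p) (X : Ω → α) (Y : Ω → β) (Z : Ω → γ) :
    ∑ t : α × β × γ, (probOf p fun ω => (X ω, Z ω) = (t.1, t.2.2)) *
        (probOf p fun ω => (Y ω, Z ω) = t.2) / probOf p (fun ω => Z ω = t.2.2) = 1 := by
  calc _ = ∑ x, ∑ z, ∑ y, (probOf p fun ω => (X ω, Z ω) = (x, z)) *
          (probOf p fun ω => (Y ω, Z ω) = (y, z)) / probOf p (fun ω => Z ω = z) := by
        simp only [Fintype.sum_prod_type]
        exact Finset.sum_congr rfl fun x _ => Finset.sum_comm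
    _ = ∑ z, (∑ x, probOf p fun ω => (X ω, Z ω) = (x, z)) *
          (∑ y, probOf p fun ω => (Y ω, Z ω) = (y, z)) / probOf p (fun ω => Z ω = z) := by
        rw [Finset.sum_comm]
        simp only [Finset.sum_mul_sum, Finset.sum_div]
    _ = 1 := by simp only [sum_probOf_pair_eq, mul_self_div_self, sum_probOf_eq_one hp]

lemma condH_submodular {α β γ : Type*} [Fintype α] [Fintype β] [Fintype γ] (hp : IsPMF p)
    (X : Ω → α) (Y : Ω → β) (Z : Ω → γ) :
    condH p X (fun ω => (Y ω, Z ω)) ≤ condH p X Z := by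
  set T := fun ω => (X ω, Y ω, Z ω)
  set q := fun t : α × β × γ => probOf p fun ω => T ω = t
  set a := fun t : α × β × γ => probOf p fun ω => (X ω, Z ω) = (t.1, t.2.2)
  set b := fun t : α × β × γ => probOf p fun ω => (Y ω, Z ω) = t.2
  set r := fun t : α × β × γ => probOf p fun ω => Z ω = t.2.2
  -- All four entropies are averages over the law `q` of `T`; the difference of the two
  -- conditional entropies is the divergence of `q` from `a b / r`, nonnegative by Gibbs.
  have hT : entH p (fun ω => (X ω, Y ω, Z ω)) = ∑ t, -(q t * log (q t)) := entH_comp_eq_sum T id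
  have hYZ : entH p (fun ω => (Y ω, Z ω)) = ∑ t, -(q t * log (b t)) :=
    entH_comp_eq_sum T Prod.snd
  have hXZ : entH p (fun ω => (X ω, Z ω)) = ∑ t, -(q t * log (a t)) :=
    entH_comp_eq_sum T fun t => (t.1, t.2.2)
  have hZ : entH p Z = ∑ t, -(q t * log (r t)) := entH_comp_eq_sum T fun t => t.2.2
  have hmono : ∀ {E : Ω → Prop} (t : α × β × γ), (∀ ω, T ω = t → E ω) → q t ≤ probOf p E :=
    fun t h => probOf_mono hp.1 h
  have hgibbs : ∑ t, (q t - a t * b t / r t) ≤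
      ∑ t, q t * (log (q t) + log (r t) - log (a t) - log (b t)) :=
    Finset.sum_le_sum fun t _ => sub_mul_div_le_mul_log (probOf_nonneg hp.1 _)
      (hmono t fun ω h => by simp [T, ← h]) (hmono t fun ω h => by simp [T, ← h])
      (hmono t fun ω h => by simp [T, ← h])
  rw [Finset.sum_sub_distrib, sum_probOf_eq_one hp T, sum_probOf_mul_probOf_div_eq_one hp,
    sub_self] at hgibbs
  have : condH p X Z - condH p X (fun ω => (Y ω, Z ω)) =
      ∑ t, q t * (log (q t) + log (r t) - log (a t) - log (b t)) := by
    simp only [condH, hT, hYZ, hXZ, hZ, ← Finset.sum_sub_distrib]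
    exact Finset.sum_congr rfl fun t _ => by ring
  linarith

lemma entH_triple_eq_add_of_indep {α β γ : Type*} [Fintype α] [Fintype β] [Fintype γ]
    (hp : IsPMF p) (X : Ω → α) (Y : Ω → β) (Z : Ω → γ)
    (h : ∀ x y z, probOf p (fun ω => X ω = x ∧ Y ω = y ∧ Z ω = z)
      = probOf p (fun ω => X ω = x) * probOf p (fun ω => Y ω = y) * probOf p (fun ω => Z ω = z)) :
    entH p (fun ω => (X ω, Y ω, Z ω)) = entH p X + entH p Y + entH p Z := by
  have hprod : ∀ t : α × β × γ, probOf p (fun ω => (X ω, Y ω, Z ω) = t) =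
      probOf p (fun ω => X ω = t.1) * probOf p (fun ω => Y ω = t.2.1) *
        probOf p (fun ω => Z ω = t.2.2) := fun t => by
    rw [← h]
    exact probOf_congr fun ω => by simp [Prod.ext_iff]
  simp only [entH, hprod, negMulLog_mul, Fintype.sum_prod_type, Finset.sum_add_distrib,
    ← Finset.mul_sum, ← Finset.sum_mul, sum_probOf_eq_one hp]
  ring

end Entropy

theorem fano_rate_bound_chain_general {Ω 𝒲₀ 𝒲₁ 𝒲₂ 𝒴₁ 𝒴₂ : Type*} [Fintype Ω]
    [Fintype 𝒲₀] [Fintype 𝒲₁] [Fintype 𝒲₂] [Fintype 𝒴₁] [Fintype 𝒴₂]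
    (p : Ω → ℝ) (hp : IsPMF p)
    (W0 : Ω → 𝒲₀) (W1 : Ω → 𝒲₁) (W2 : Ω → 𝒲₂) (Y1 : Ω → 𝒴₁) (Y2 : Ω → 𝒴₂)
    (hIndep : ∀ (a : 𝒲₀) (b : 𝒲₁) (c : 𝒲₂),
      probOf p (fun ω => W0 ω = a ∧ W1 ω = b ∧ W2 ω = c)
        = probOf p (fun ω => W0 ω = a) * probOf p (fun ω => W1 ω = b)
            * probOf p (fun ω => W2 ω = c))
    (n : ℕ) (hn : 0 < n) (ε0 ε1 ε2 R0 R1 R2 : ℝ)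
    (hFano0 : condH p W0 Y2 ≤ n * ε0)
    (hFano1 : condH p (fun ω => (W0 ω, W1 ω)) Y1 ≤ n * ε1)
    (hFano2 : condH p (fun ω => (W0 ω, W2 ω)) Y2 ≤ n * ε2)
    (hR0 : R0 = entH p W0 / n) (hR1 : R1 = entH p W1 / n) (hR2 : R2 = entH p W2 / n) :
    n * (R0 + R1 + R2) - n * (ε0 + ε1 + ε2)
      ≤ mi p (fun ω => (W0 ω, W1 ω, W2 ω)) Y1
          - cmi p W2 Y1 W0 + cmi p W2 Y2 W0 := by
  have hrates : n * (R0 + R1 + R2) = entH p W0 + entH p W1 + entH p W2 := by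
    subst hR0 hR1 hR2
    field_simp
  have hsplit := entH_triple_eq_add_of_indep hp W0 W1 W2 hIndep
  have hW0 := condH_nonneg hp.1 W0 Y2
  have hY2 := entH_comp_le hp.1 (fun ω => (Y2 ω, W0 ω)) Prod.fst
  have hsub := condH_submodular hp W2 W1 (fun ω => (Y1 ω, W0 ω))
  have hperm₁ : entH p (fun ω => ((W0 ω, W1 ω, W2 ω), Y1 ω)) =
      entH p (fun ω => (W2 ω, W1 ω, Y1 ω, W0 ω)) :=
    entH_congr hp.1 (fun t => (t.1.2.2, t.1.2.1, t.2, t.1.1))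
      (fun s => ((s.2.2.2, s.2.1, s.1), s.2.2.1)) (fun _ => rfl) (fun _ => rfl)
  have hperm₂ := entH_prod_rotate hp.1 W0 W1 Y1
  have hperm₃ := entH_prod_rotate hp.1 W0 W2 Y2
  rw [hrates]
  unfold mi cmi condH at *
  linarith

/-- **Fano-type rate bound chain.** If `W_0, W_1, W_2` are independent uniform
messages and `H(W_0|Y_2) ≤ nε_0`, `H(W_0,W_1|Y_1) ≤ nε_1`, `H(W_0,W_2|Y_2) ≤ nε_2`, then with
`R_b = H(W_b)/n`,
`n(R_0+R_1+R_2) - n(ε_0+ε_1+ε_2) ≤ I(W_0,W_1,W_2;Y_1) - I(W_2;Y_1|W_0) + I(W_2;Y_2|W_0)`. -/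
theorem fano_rate_bound_chain {Ω 𝒲₀ 𝒲₁ 𝒲₂ 𝒴₁ 𝒴₂ : Type*} [Fintype Ω]
    [Fintype 𝒲₀] [Fintype 𝒲₁] [Fintype 𝒲₂] [Fintype 𝒴₁] [Fintype 𝒴₂]
    [Nonempty 𝒲₀] [Nonempty 𝒲₁] [Nonempty 𝒲₂]
    (p : Ω → ℝ) (hp : IsPMF p)
    (W0 : Ω → 𝒲₀) (W1 : Ω → 𝒲₁) (W2 : Ω → 𝒲₂) (Y1 : Ω → 𝒴₁) (Y2 : Ω → 𝒴₂)
    (hIndep : ∀ (a : 𝒲₀) (b : 𝒲₁) (c : 𝒲₂),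
      probOf p (fun ω => W0 ω = a ∧ W1 ω = b ∧ W2 ω = c)
        = probOf p (fun ω => W0 ω = a) * probOf p (fun ω => W1 ω = b)
            * probOf p (fun ω => W2 ω = c))
    (hUnif0 : ∀ a : 𝒲₀, probOf p (fun ω => W0 ω = a) = 1 / Fintype.card 𝒲₀)
    (hUnif1 : ∀ b : 𝒲₁, probOf p (fun ω => W1 ω = b) = 1 / Fintype.card 𝒲₁)
    (hUnif2 : ∀ c : 𝒲₂, probOf p (fun ω => W2 ω = c) = 1 / Fintype.card 𝒲₂)
    (n : ℕ) (hn : 0 < n) (ε0 ε1 ε2 R0 R1 R2 : ℝ)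
    (hFano0 : condH p W0 Y2 ≤ n * ε0)
    (hFano1 : condH p (fun ω => (W0 ω, W1 ω)) Y1 ≤ n * ε1)
    (hFano2 : condH p (fun ω => (W0 ω, W2 ω)) Y2 ≤ n * ε2)
    (hR0 : R0 = entH p W0 / n) (hR1 : R1 = entH p W1 / n) (hR2 : R2 = entH p W2 / n) :
    n * (R0 + R1 + R2) - n * (ε0 + ε1 + ε2)
      ≤ mi p (fun ω => (W0 ω, W1 ω, W2 ω)) Y1
          - cmi p W2 Y1 W0 + cmi p W2 Y2 W0 :=
  fano_rate_bound_chain_general p hp W0 W1 W2 Y1 Y2 hIndep n hn ε0 ε1 ε2 R0 R1 R2 hFano0 hFano1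
    hFano2 hR0 hR1 hR2
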